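/- Worst-case validation error ratio over the weight sphere: let n' ≥ 1, ζ ∈ {0,1}^{n'}, Q > 0, and m = Σ_i ζ_i. Then the supremum of (n' − ζ·w') / n' over the set {w' ∈ ℝ^{n'} : ‖w' − 1_{n'}‖₂ ≤ Q and Σ_i w'_i = n'} equals 1 − (m − Q √(m − m²/n'))/n', and this supremum is attained. -/

import Mathlib

/-!
Write `w' = 1 + u`. The constraints say exactly that `u ⟂ 1` and `‖u‖ ≤ Q`, and then
`ζ·w' = m + ζ·u = m + v·u`, where `v` is the component of `ζ` orthogonal to `1`. By
Cauchy–Schwarz `ζ·w' ≥ m - Q‖v‖`, with equality at `u = -Q v / ‖v‖`, and by Pythagoras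
`‖v‖² = ‖ζ‖² - (1·ζ)²/n' = m - m²/n'`, since `ζ` is `0/1`-valued.
-/

/-- The all-ones vector in `ℝ^n` (as a Euclidean space). -/
noncomputable def onesVec (n : ℕ) : EuclideanSpace ℝ (Fin n) := WithLp.toLp 2 (fun _ : Fin n => (1 : ℝ))

open RealInnerProductSpace Metric

section InnerProductSpace

variable {E : Type*} [NormedAddCommGroup E] [InnerProductSpace ℝ E]

theorem isLeast_inner_image_inter_closedBall (K : Submodule ℝ E) [K.HasOrthogonalProjection]
    (z : E) {Q : ℝ} (hQ : 0 ≤ Q) :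
    IsLeast ((fun u => ⟪z, u⟫) '' ((K : Set E) ∩ closedBall 0 Q))
      (-(Q * ‖K.starProjection z‖)) := by
  set v := K.starProjection z
  have inner_eq (u : E) (hu : u ∈ K) : ⟪z, u⟫ = ⟪v, u⟫ := by
    rw [K.inner_starProjection_left_eq_right, K.starProjection_eq_self_iff.mpr hu]
  have hvK : v ∈ K := K.starProjection_apply_mem z
  constructor
  · refine ⟨-(Q / ‖v‖) • v, ⟨K.smul_mem _ hvK, ?_⟩, ?_⟩
    · rcases eq_or_ne ‖v‖ 0 with hv | hv
      · simp [hv, hQ]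
      · simp [norm_smul, abs_of_nonneg hQ, hv]
    · dsimp only
      rw [inner_eq _ (K.smul_mem _ hvK), real_inner_smul_right, real_inner_self_eq_norm_sq]
      rcases eq_or_ne ‖v‖ 0 with hv | hv
      · simp [hv]
      · field_simp
  · rintro _ ⟨u, ⟨huK, hu⟩, rfl⟩
    rw [mem_closedBall_zero_iff] at hu
    calc -(Q * ‖v‖) ≤ -(‖v‖ * ‖u‖) := by nlinarith [norm_nonneg v]
      _ ≤ ⟪v, u⟫ := neg_le_of_abs_le (abs_real_inner_le_norm v u)
      _ = ⟪z, u⟫ := (inner_eq u huK).symm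

theorem norm_starProjection_orthogonal_singleton_sq (e z : E) :
    ‖(ℝ ∙ e)ᗮ.starProjection z‖ ^ 2 = ‖z‖ ^ 2 - ⟪e, z⟫ ^ 2 / ‖e‖ ^ 2 := by
  have pythagoras := Submodule.norm_sq_eq_add_norm_sq_starProjection z (ℝ ∙ e)
  rw [Submodule.starProjection_singleton, norm_smul, Real.norm_eq_abs,
    RCLike.ofReal_real_eq_id, id, mul_pow, sq_abs, div_pow] at pythagoras
  rcases eq_or_ne ‖e‖ 0 with he | he
  · simp [he] at pythagoras ⊢
    exact pythagoras.symm
  · field_simp at pythagoras ⊢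
    linarith

theorem isLeast_inner_image_closedBall_inter_hyperplane (e z : E) {Q : ℝ} (hQ : 0 ≤ Q) :
    IsLeast ((fun w => ⟪z, w⟫) '' {w | ‖w - e‖ ≤ Q ∧ ⟪e, w⟫ = ‖e‖ ^ 2})
      (⟪z, e⟫ - Q * ‖(ℝ ∙ e)ᗮ.starProjection z‖) := by
  have slice_eq : {w | ‖w - e‖ ≤ Q ∧ ⟪e, w⟫ = ‖e‖ ^ 2} =
      (e + ·) '' (((ℝ ∙ e)ᗮ : Set E) ∩ closedBall 0 Q) := by
    ext w
    simp only [Set.mem_ofPred_eq, Set.mem_image, Set.mem_inter_iff, SetLike.mem_coe,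
      Submodule.mem_orthogonal_singleton_iff_inner_right, mem_closedBall_zero_iff]
    constructor
    · rintro ⟨hw, he⟩
      refine ⟨w - e, ⟨?_, hw⟩, add_sub_cancel e w⟩
      rw [inner_sub_right, he, real_inner_self_eq_norm_sq, sub_self]
    · rintro ⟨u, ⟨hu, hQu⟩, rfl⟩
      simp [hQu, inner_add_right, hu]
  rw [slice_eq, Set.image_image, sub_eq_add_neg]
  simp only [inner_add_right]
  simpa [Set.image_image] using (monotone_id.const_add ⟪z, e⟫).map_isLeast
    (isLeast_inner_image_inter_closedBall (ℝ ∙ e)ᗮ z hQ)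

end InnerProductSpace

namespace EuclideanSpace

variable {n : ℕ}

theorem real_inner_eq_sum_mul (x y : EuclideanSpace ℝ (Fin n)) : ⟪x, y⟫ = ∑ i, x i * y i := by
  simp [PiLp.inner_apply, mul_comm]

theorem norm_sq_eq_sum_of_mem_zero_one {ζ : EuclideanSpace ℝ (Fin n)}
    (hζ : ∀ i, ζ i = 0 ∨ ζ i = 1) : ‖ζ‖ ^ 2 = ∑ i, ζ i := by
  rw [real_norm_sq_eq]
  refine Finset.sum_congr rfl fun i _ => ?_
  rcases hζ i with h | h <;> simp [h]

end EuclideanSpace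

theorem inner_onesVec_left {n : ℕ} (w : EuclideanSpace ℝ (Fin n)) :
    ⟪onesVec n, w⟫ = ∑ i, w i := by
  simp [EuclideanSpace.real_inner_eq_sum_mul, onesVec]

theorem norm_onesVec_sq {n : ℕ} : ‖onesVec n‖ ^ 2 = n := by
  simp [EuclideanSpace.real_norm_sq_eq, onesVec]

/-- worst-case validation error ratio over the weight sphere:
for `n' ≥ 1`, `ζ ∈ {0,1}^{n'}`, `Q > 0` and `m = Σ_i ζ_i`, the supremum of
`(n' − ζ·w')/n'` over `{w' : ‖w' − 1‖₂ ≤ Q ∧ Σ_i w'_i = n'}` equals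
`1 − (m − Q √(m − m²/n'))/n'`, and it is attained. -/
theorem worst_case_error_ratio_over_sphere {n' : ℕ} (hn : 1 ≤ n')
    (ζ : EuclideanSpace ℝ (Fin n')) (hζ : ∀ i, ζ i = 0 ∨ ζ i = 1)
    (Q : ℝ) (hQ : 0 < Q) (m : ℝ) (hm : m = ∑ i, ζ i) :
    IsGreatest ((fun w' : EuclideanSpace ℝ (Fin n') =>
          ((n' : ℝ) - ∑ i, ζ i * w' i) / (n' : ℝ)) ''
        {w' | ‖w' - onesVec n'‖ ≤ Q ∧ ∑ i, w' i = (n' : ℝ)})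
      (1 - (m - Q * Real.sqrt (m - m ^ 2 / (n' : ℝ))) / (n' : ℝ)) := by
  have hn_pos : (0 : ℝ) < n' := by exact_mod_cast hn
  have least := isLeast_inner_image_closedBall_inter_hyperplane (onesVec n') ζ hQ.le
  have hζe : ⟪onesVec n', ζ⟫ = m := by rw [inner_onesVec_left, hm]
  have hv : ‖(ℝ ∙ onesVec n')ᗮ.starProjection ζ‖ = √(m - m ^ 2 / n') := by
    rw [← Real.sqrt_sq (norm_nonneg _), norm_starProjection_orthogonal_singleton_sq,
      EuclideanSpace.norm_sq_eq_sum_of_mem_zero_one hζ, ← hm, hζe, norm_onesVec_sq]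
  rw [hv, real_inner_comm, hζe] at least
  simp only [inner_onesVec_left, norm_onesVec_sq] at least
  simp only [EuclideanSpace.real_inner_eq_sum_mul] at least
  have anti : StrictAnti fun t : ℝ => ((n' : ℝ) - t) / n' := fun a b hab => by
    dsimp only
    gcongr
  have greatest := anti.map_isGreatest.mpr least
  rwa [Set.image_image, sub_div, div_self hn_pos.ne'] at greatest
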